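/- arXiv:2105.12498 — 2 statements merged into one kernel-verified Lean document; each statement's English description precedes it below -/
import Mathlib

section
/- Let T be an Ax-maximal consistent set of PTEL formulas such that for every formula α, ●(α ∧ ¬α) ∉ T. Then the set T^{−●} = {α : ●α ∈ T} is Ax-maximal consistent, and moreover T = (T^{−●})^{−◯}, where S^{−◯} = {α : ◯α ∈ S}. -/
namespace PTEL

/-- Formulas of the probabilistic temporal epistemic logic PTEL with `m` agents
(agents are `Fin m`).  Propositional letters are `atom n` (`n : ℕ`) together with
the special letters `act a` (the letter `A_a`, "agent `a` is active"). -/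
inductive Frm (m : ℕ) : Type where
  | atom   : ℕ → Frm m
  | act    : Fin m → Frm m
  | neg    : Frm m → Frm m
  | and    : Frm m → Frm m → Frm m
  | next   : Frm m → Frm m
  | until  : Frm m → Frm m → Frm m
  | prev   : Frm m → Frm m
  | since  : Frm m → Frm m → Frm m
  | know   : Fin m → Frm m → Frm m
  | common : Frm m → Frm m
  | pge    : ℚ → Frm m → Frm m            -- P_{≥ s} α
  | page   : Fin m → ℚ → Frm m → Frm m    -- P_{a, ≥ s} α

namespace Frm

variable {m : ℕ}

/-- `α → β` defined classically as `¬(α ∧ ¬β)`. -/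
def imp (α β : Frm m) : Frm m := Frm.neg (Frm.and α (Frm.neg β))

/-- `α ∨ β` defined classically. -/
def orf (α β : Frm m) : Frm m := Frm.neg (Frm.and (Frm.neg α) (Frm.neg β))

/-- `α ↔ β`. -/
def ifff (α β : Frm m) : Frm m := Frm.and (imp α β) (imp β α)

/-- A fixed tautology `⊤`. -/
def verum : Frm m := imp (Frm.atom 0) (Frm.atom 0)

/-- `◯^n α`. -/
def nextPow : ℕ → Frm m → Frm m
  | 0, α => α
  | n + 1, α => Frm.next (nextPow n α)

/-- `●^n α`. -/
def prevPow : ℕ → Frm m → Frm m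
  | 0, α => α
  | n + 1, α => Frm.prev (prevPow n α)

/-- `⋀_{l=0}^{n-1} f l` (the empty conjunction is `⊤`). -/
def conjBelow (f : ℕ → Frm m) : ℕ → Frm m
  | 0 => verum
  | n + 1 => Frm.and (conjBelow f n) (f n)

/-- `G α = ⋀_{a ∈ Agents} K_a α` (everybody knows). -/
def ek (α : Frm m) : Frm m :=
  (List.finRange m).foldr (fun a acc => Frm.and (Frm.know a α) acc) verum

/-- `G^n α` where `G^0 α = α` and `G^{n+1} α = G (G^n α)`. -/
def ekPow : ℕ → Frm m → Frm m
  | 0, α => α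
  | n + 1, α => ek (ekPow n α)

/-- `◇ α = (α → α) U α`. -/
def sometime (α : Frm m) : Frm m := Frm.until (imp α α) α

/-- `□ α = ¬ ◇ ¬ α`. -/
def always (α : Frm m) : Frm m := Frm.neg (sometime (Frm.neg α))

/-- `P_{< s} α  =  ¬ P_{≥ s} α`. -/
def plt (s : ℚ) (α : Frm m) : Frm m := Frm.neg (Frm.pge s α)

/-- `P_{≤ s} α  =  P_{≥ 1-s} ¬α`. -/
def ple (s : ℚ) (α : Frm m) : Frm m := Frm.pge (1 - s) (Frm.neg α)

/-- `P_{a, < s} α  =  ¬ P_{a, ≥ s} α`. -/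
def palt (a : Fin m) (s : ℚ) (α : Frm m) : Frm m := Frm.neg (Frm.page a s α)

/-- `P_{a, ≤ s} α  =  P_{a, ≥ 1-s} ¬α`. -/
def pale (a : Fin m) (s : ℚ) (α : Frm m) : Frm m := Frm.page a (1 - s) (Frm.neg α)

end Frm

/-- The unary operators `K_a`, `◯`, `●` used in `k`-nested implications. -/
inductive Op (m : ℕ) : Type where
  | know : Fin m → Op m
  | next : Op m
  | prev : Op m

def Op.app {m : ℕ} : Op m → Frm m → Frm m
  | .know a, α => Frm.know a α
  | .next, α => Frm.next α
  | .prev, α => Frm.prev α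

/-- The `k`-nested implication `Φ_{k,B,X}(τ)`.  Here `β0` is the innermost formula
`β_0`, and `L = [(β_k, X_k), (β_{k-1}, X_{k-1}), …, (β_1, X_1)]` lists the remaining
formulas of `B` paired with the operators of `X`, from the outermost inwards:
`Φ_{0,(β_0),()}(τ) = β_0 → τ` and
`Φ_{k,B,X}(τ) = β_k → X_k Φ_{k-1,(β_0,…,β_{k-1}),(X_1,…,X_{k-1})}(τ)` for `k ≥ 1`. -/
def KNI {m : ℕ} (β0 : Frm m) : List (Frm m × Op m) → Frm m → Frm m
  | [], τ => Frm.imp β0 τ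
  | p :: L, τ => Frm.imp p.1 (Op.app p.2 (KNI β0 L τ))

/-- Instances of classical propositional tautologies: formulas true under every
Boolean valuation that respects `¬` and `∧`. -/
def IsTautology {m : ℕ} (φ : Frm m) : Prop :=
  ∀ v : Frm m → Bool,
    (∀ α, v (Frm.neg α) = !(v α)) →
    (∀ α β, v (Frm.and α β) = (v α && v β)) →
    v φ = true

/-- `q ∈ [0,1] ∩ ℚ`. -/
def InUnit (q : ℚ) : Prop := 0 ≤ q ∧ q ≤ 1

/-- Derivability in the axiomatic system `Ax` of PTEL.  Premises of the
necessitation rules must be theorems (derivable from `∅`); the rules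
`ruleUntil`, `ruleSince`, `ruleCommon`, `ruleArch`, `ruleArchA` are the
infinitary rules RU, RS, RC, RGA, RA formulated via `k`-nested implications. -/
inductive Deriv {m : ℕ} : Set (Frm m) → Frm m → Prop where
  -- I. propositional part
  | hyp {T : Set (Frm m)} {φ} (h : φ ∈ T) : Deriv T φ
  | tauto {T : Set (Frm m)} {φ} (h : IsTautology φ) : Deriv T φ
  | mp {T : Set (Frm m)} {φ ψ} (h1 : Deriv T (Frm.imp φ ψ)) (h2 : Deriv T φ) : Deriv T ψ
  -- II. temporal axioms and rules
  | axNextNeg {T : Set (Frm m)} (α) :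
      Deriv T (Frm.ifff (Frm.neg (Frm.next α)) (Frm.next (Frm.neg α)))
  | axNextImp {T : Set (Frm m)} (α β) :
      Deriv T (Frm.imp (Frm.next (Frm.imp α β)) (Frm.imp (Frm.next α) (Frm.next β)))
  | axUntilNext {T : Set (Frm m)} (α β) :
      Deriv T (Frm.ifff (Frm.until α β)
        (Frm.orf β (Frm.and α (Frm.next (Frm.until α β)))))
  | axUntilSometime {T : Set (Frm m)} (α β) :
      Deriv T (Frm.imp (Frm.until α β) (Frm.sometime β))
  | axPrevNeg {T : Set (Frm m)} (α) :
      Deriv T (Frm.imp (Frm.neg (Frm.prev (Frm.neg α))) (Frm.prev α))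
  | axPrevImp {T : Set (Frm m)} (α β) :
      Deriv T (Frm.imp (Frm.prev (Frm.imp α β)) (Frm.imp (Frm.prev α) (Frm.prev β)))
  | axPrevAnd {T : Set (Frm m)} (α β) :
      Deriv T (Frm.imp (Frm.and (Frm.prev α) (Frm.prev β)) (Frm.prev (Frm.and α β)))
  | axNextPrev {T : Set (Frm m)} (α) :
      Deriv T (Frm.ifff (Frm.next (Frm.prev α)) α)
  | axNextPrevC1 {T : Set (Frm m)} (α) :
      Deriv T (Frm.imp (Frm.next (Frm.prev α)) (Frm.prev (Frm.next α)))
  | axNextPrevC2 {T : Set (Frm m)} (α γ) :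
      Deriv T (Frm.imp (Frm.neg (Frm.prev (Frm.and γ (Frm.neg γ))))
        (Frm.ifff (Frm.next (Frm.prev α)) (Frm.prev (Frm.next α))))
  | axSincePrev {T : Set (Frm m)} (α β) :
      Deriv T (Frm.ifff (Frm.since α β)
        (Frm.orf β (Frm.and (Frm.neg (Frm.prev (Frm.and α (Frm.neg α))))
          (Frm.and α (Frm.prev (Frm.since α β))))))
  | axOncePrev {T : Set (Frm m)} (β) :
      Deriv T (Frm.since (Frm.imp (Frm.prev β) (Frm.prev β)) (Frm.prev β))
  | ruleNextNec {T : Set (Frm m)} {α} (h : Deriv ∅ α) : Deriv T (Frm.next α)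
  | rulePrevNec {T : Set (Frm m)} {α} (h : Deriv ∅ α) : Deriv T (Frm.prev α)
  | ruleUntil {T : Set (Frm m)} {β0 : Frm m} {L : List (Frm m × Op m)} {α β : Frm m}
      (h : ∀ i : ℕ, Deriv T (KNI β0 L (Frm.neg
        (Frm.and (Frm.conjBelow (fun l => Frm.nextPow l α) i) (Frm.nextPow i β))))) :
      Deriv T (KNI β0 L (Frm.neg (Frm.until α β)))
  | ruleSince {T : Set (Frm m)} {β0 : Frm m} {L : List (Frm m × Op m)} {α β : Frm m}
      (h : ∀ i : ℕ, Deriv T (KNI β0 L (Frm.neg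
        (Frm.and (Frm.conjBelow (fun l => Frm.prevPow l α) i)
          (Frm.and (Frm.conjBelow (fun l => Frm.neg (Frm.prevPow l (Frm.and α (Frm.neg α)))) (i + 1))
            (Frm.prevPow i β)))))) :
      Deriv T (KNI β0 L (Frm.neg (Frm.since α β)))
  -- III. epistemic axioms and rules
  | axKImp {T : Set (Frm m)} (a : Fin m) (α β) :
      Deriv T (Frm.imp (Frm.know a (Frm.imp α β)) (Frm.imp (Frm.know a α) (Frm.know a β)))
  | axKRefl {T : Set (Frm m)} (a : Fin m) (α) :
      Deriv T (Frm.imp (Frm.act a) (Frm.imp (Frm.know a α) α))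
  | axKAware {T : Set (Frm m)} (a : Fin m) :
      Deriv T (Frm.imp (Frm.act a) (Frm.know a (Frm.act a)))
  | axKDead {T : Set (Frm m)} (a : Fin m) (α) :
      Deriv T (Frm.imp (Frm.neg (Frm.act a)) (Frm.know a (Frm.and α (Frm.neg α))))
  | axKSymm {T : Set (Frm m)} (a : Fin m) (α) :
      Deriv T (Frm.imp (Frm.know a (Frm.neg α)) (Frm.know a (Frm.neg (Frm.know a α))))
  | axKTrans {T : Set (Frm m)} (a : Fin m) (α) :
      Deriv T (Frm.imp (Frm.know a α) (Frm.know a (Frm.know a α)))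
  | axCommon {T : Set (Frm m)} (α) (n : ℕ) :
      Deriv T (Frm.imp (Frm.common α) (Frm.ekPow n α))
  | ruleKNec {T : Set (Frm m)} (a : Fin m) {α} (h : Deriv ∅ α) : Deriv T (Frm.know a α)
  | ruleCommon {T : Set (Frm m)} {β0 : Frm m} {L : List (Frm m × Op m)} {α : Frm m}
      (h : ∀ i : ℕ, Deriv T (KNI β0 L (Frm.ekPow i α))) :
      Deriv T (KNI β0 L (Frm.common α))
  -- IV. probabilities on runs
  | axPge0 {T : Set (Frm m)} (α) : Deriv T (Frm.pge 0 α)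
  | axPleLt {T : Set (Frm m)} (α) {r t : ℚ} (hr : InUnit r) (ht : InUnit t) (h : r < t) :
      Deriv T (Frm.imp (Frm.ple r α) (Frm.plt t α))
  | axPltLe {T : Set (Frm m)} (α) {t : ℚ} (ht : InUnit t) :
      Deriv T (Frm.imp (Frm.plt t α) (Frm.ple t α))
  | axPAdd {T : Set (Frm m)} (α β) {r t : ℚ} (hr : InUnit r) (ht : InUnit t) :
      Deriv T (Frm.imp
        (Frm.and (Frm.pge r α) (Frm.and (Frm.pge t β) (Frm.pge 1 (Frm.neg (Frm.and α β)))))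
        (Frm.pge (min 1 (r + t)) (Frm.orf α β)))
  | axPAdd2 {T : Set (Frm m)} (α β) {r t : ℚ} (hr : InUnit r) (ht : InUnit t)
      (h : r + t ≤ 1) :
      Deriv T (Frm.imp (Frm.and (Frm.ple r α) (Frm.plt t α)) (Frm.plt (r + t) (Frm.orf α β)))
  | axPPrev {T : Set (Frm m)} (α) :
      Deriv T (Frm.pge 1 (Frm.prev (Frm.and α (Frm.neg α))))
  | rulePNec {T : Set (Frm m)} {α} (h : Deriv ∅ α) : Deriv T (Frm.pge 1 α)
  | ruleArch {T : Set (Frm m)} {β0 : Frm m} {L : List (Frm m × Op m)} {α : Frm m} {r : ℚ}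
      (hr0 : 0 < r) (hr1 : r ≤ 1)
      (h : ∀ i : ℕ, 1 / r ≤ (i : ℚ) → Deriv T (KNI β0 L (Frm.pge (r - 1 / (i : ℚ)) α))) :
      Deriv T (KNI β0 L (Frm.pge r α))
  -- V. probabilities on possible worlds
  | axPAge0 {T : Set (Frm m)} (a : Fin m) (α) : Deriv T (Frm.page a 0 α)
  | axPALeLt {T : Set (Frm m)} (a : Fin m) (α) {r t : ℚ} (hr : InUnit r) (ht : InUnit t)
      (h : r < t) :
      Deriv T (Frm.imp (Frm.pale a r α) (Frm.palt a t α))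
  | axPALtLe {T : Set (Frm m)} (a : Fin m) (α) {t : ℚ} (ht : InUnit t) :
      Deriv T (Frm.imp (Frm.palt a t α) (Frm.pale a t α))
  | axPAAdd {T : Set (Frm m)} (a : Fin m) (α β) {r t : ℚ} (hr : InUnit r) (ht : InUnit t) :
      Deriv T (Frm.imp
        (Frm.and (Frm.page a r α)
          (Frm.and (Frm.page a t β) (Frm.page a 1 (Frm.neg (Frm.and α β)))))
        (Frm.page a (min 1 (r + t)) (Frm.orf α β)))
  | axPAAdd2 {T : Set (Frm m)} (a : Fin m) (α β) {r t : ℚ} (hr : InUnit r) (ht : InUnit t)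
      (h : r + t ≤ 1) :
      Deriv T (Frm.imp (Frm.and (Frm.pale a r α) (Frm.palt a t α))
        (Frm.palt a (r + t) (Frm.orf α β)))
  | rulePANec {T : Set (Frm m)} (a : Fin m) {α} (h : Deriv ∅ α) : Deriv T (Frm.page a 1 α)
  | ruleArchA {T : Set (Frm m)} (a : Fin m) {β0 : Frm m} {L : List (Frm m × Op m)}
      {α : Frm m} {r : ℚ} (hr0 : 0 < r) (hr1 : r ≤ 1)
      (h : ∀ i : ℕ, 1 / r ≤ (i : ℚ) →
        Deriv T (KNI β0 L (Frm.page a (r - 1 / (i : ℚ)) α))) :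
      Deriv T (KNI β0 L (Frm.page a r α))

/-- A theory is inconsistent if it derives every formula. -/
def Inconsistent {m : ℕ} (T : Set (Frm m)) : Prop := ∀ φ : Frm m, Deriv T φ

def Consistent {m : ℕ} (T : Set (Frm m)) : Prop := ¬ Inconsistent T

def MaximalConsistent {m : ℕ} (T : Set (Frm m)) : Prop :=
  Consistent T ∧ ∀ S : Set (Frm m), T ⊂ S → ¬ Consistent S

/-! ### Semantics -/

/-- A run assigns to each moment the set of propositional letters true at it
(`Sum.inl n` is the letter `atom n`, `Sum.inr a` is the letter `A_a`). -/
abbrev Run (m : ℕ) : Type := ℕ → Set (ℕ ⊕ Fin m)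

/-- A finitely additive probability measure defined on an algebra of subsets of `X`. -/
structure FinAddProb (X : Type) where
  sets : Set (Set X)
  univ_mem : Set.univ ∈ sets
  compl_mem : ∀ A ∈ sets, Aᶜ ∈ sets
  union_mem : ∀ A ∈ sets, ∀ B ∈ sets, A ∪ B ∈ sets
  mu : Set X → ℝ
  mu_nonneg : ∀ A ∈ sets, 0 ≤ mu A
  mu_univ : mu Set.univ = 1
  mu_add : ∀ A ∈ sets, ∀ B ∈ sets, Disjoint A B → mu (A ∪ B) = mu A + mu B

/-- A finitely additive probability space on a nonempty subset (`carrier`) of `X`,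
with an algebra of subsets of the carrier. -/
structure SubFinAddProb (X : Type) where
  carrier : Set X
  carrier_nonempty : carrier.Nonempty
  sets : Set (Set X)
  sets_sub : ∀ A ∈ sets, A ⊆ carrier
  carrier_mem : carrier ∈ sets
  compl_mem : ∀ A ∈ sets, carrier \ A ∈ sets
  union_mem : ∀ A ∈ sets, ∀ B ∈ sets, A ∪ B ∈ sets
  mu : Set X → ℝ
  mu_nonneg : ∀ A ∈ sets, 0 ≤ mu A
  mu_carrier : mu carrier = 1
  mu_add : ∀ A ∈ sets, ∀ B ∈ sets, Disjoint A B → mu (A ∪ B) = mu A + mu B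

/-- A PTEL Kripke model. -/
structure Model (m : ℕ) where
  runs : Set (Run m)
  runs_nonempty : runs.Nonempty
  /-- epistemic accessibility relations on possible worlds (pairs run/time) -/
  acc : Fin m → (↥runs × ℕ) → (↥runs × ℕ) → Prop
  acc_symm : ∀ a w w', acc a w w' → acc a w' w
  acc_trans : ∀ a w w' w'', acc a w w' → acc a w' w'' → acc a w w''
  /-- agent `a` is inactive at `w` iff no world is accessible from `w` -/
  inactive_iff : ∀ (a : Fin m) (w : ↥runs × ℕ),
    Sum.inr a ∉ w.1.1 w.2 ↔ ∀ w', ¬ acc a w w'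
  /-- accessibility is reflexive at worlds where the agent is active -/
  acc_refl : ∀ (a : Fin m) (w : ↥runs × ℕ), Sum.inr a ∈ w.1.1 w.2 → acc a w w
  /-- the probability on runs associated to each possible world -/
  runProb : (↥runs × ℕ) → FinAddProb ↥runs
  /-- the agents' probability spaces on possible worlds -/
  agentProb : Fin m → (↥runs × ℕ) → SubFinAddProb (↥runs × ℕ)

abbrev Model.World {m : ℕ} (M : Model m) : Type := ↥M.runs × ℕ

/-- Satisfaction of a formula at a possible world of a model.  Common knowledge is
interpreted via reachability (the equivalent formulation of `(r,n) ⊨ C β`). -/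
def Sat {m : ℕ} (M : Model m) : Frm m → M.World → Prop
  | .atom n, w => Sum.inl n ∈ w.1.1 w.2
  | .act a, w => Sum.inr a ∈ w.1.1 w.2
  | .neg α, w => ¬ Sat M α w
  | .and α β, w => Sat M α w ∧ Sat M β w
  | .next α, w => Sat M α (w.1, w.2 + 1)
  | .until α β, w => ∃ j, w.2 ≤ j ∧ Sat M β (w.1, j) ∧
      ∀ k, w.2 ≤ k → k < j → Sat M α (w.1, k)
  | .prev α, w => w.2 = 0 ∨ ∃ n, w.2 = n + 1 ∧ Sat M α (w.1, n)
  | .since α β, w => ∃ j, j ≤ w.2 ∧ Sat M β (w.1, j) ∧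
      ∀ k, j < k → k ≤ w.2 → Sat M α (w.1, k)
  | .know a α, w => ∀ w', M.acc a w w' → Sat M α w'
  | .common α, w => ∀ w', Relation.ReflTransGen (fun u v => ∃ a, M.acc a u v) w w' →
      Sat M α w'
  | .pge s α, w => (s : ℝ) ≤ (M.runProb w).mu {r : ↥M.runs | Sat M α (r, 0)}
  | .page a s α, w => (s : ℝ) ≤ (M.agentProb a w).mu
      {w' : M.World | w' ∈ (M.agentProb a w).carrier ∧ Sat M α w'}

/-- A model is measurable if all definable sets of runs / of possible worlds are
measurable. -/
def Model.Measurable {m : ℕ} (M : Model m) : Prop :=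
  ∀ (β : Frm m) (w : M.World),
    {r : ↥M.runs | Sat M β (r, 0)} ∈ (M.runProb w).sets ∧
    ∀ a : Fin m,
      {w' : M.World | w' ∈ (M.agentProb a w).carrier ∧ Sat M β w'} ∈ (M.agentProb a w).sets

/-- A set of formulas is satisfiable if it holds at a possible world of some
measurable model. -/
def SatisfiableSet {m : ℕ} (T : Set (Frm m)) : Prop :=
  ∃ M : Model m, M.Measurable ∧ ∃ w : M.World, ∀ φ ∈ T, Sat M φ w

end PTEL

/-!
Every derivation from `T^{-●}` can be pushed under `●`: hypotheses `α` become `●α ∈ T`,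
theorems are handled by `●`-necessitation, modus ponens by `●(α → β) → ●α → ●β`, and the
infinitary rules survive because their conclusions are `k`-nested implications, to which one
more `(⊤, ●)` layer can be added. Hence `T^{-●}` is deductively closed, and it is consistent
because `●(α ∧ ¬α) ∉ T`; it is complete because `¬●¬¬α → ●¬α`. The identity
`T = (T^{-●})^{-◯}` is `α ↔ ◯●α` together with `◯●α ↔ ●◯α`; the latter is an axiom only
under the antecedent `¬●(α ∧ ¬α)`, since `●⊥` holds exactly at the initial moment, where
`◯●α ↔ ●◯α` fails.
-/

namespace PTEL

section

variable {m : ℕ}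

namespace IsTautology

theorem imp_self (a : Frm m) : IsTautology (Frm.imp a a) := by
  intro v hn ha
  simp only [Frm.imp, hn, ha]
  cases v a <;> rfl

theorem imp_intro (a b : Frm m) : IsTautology (Frm.imp a (Frm.imp b a)) := by
  intro v hn ha
  simp only [Frm.imp, hn, ha]
  cases v a <;> cases v b <;> rfl

theorem imp_imp_distrib (a b c : Frm m) :
    IsTautology (Frm.imp (Frm.imp a (Frm.imp b c)) (Frm.imp (Frm.imp a b) (Frm.imp a c))) := by
  intro v hn ha
  simp only [Frm.imp, hn, ha]
  cases v a <;> cases v b <;> cases v c <;> rfl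

theorem and_imp_mp (a b c : Frm m) :
    IsTautology (Frm.imp (Frm.imp (Frm.and a b) c) (Frm.imp a (Frm.imp b c))) := by
  intro v hn ha
  simp only [Frm.imp, hn, ha]
  cases v a <;> cases v b <;> cases v c <;> rfl

theorem and_imp_mpr (a b c : Frm m) :
    IsTautology (Frm.imp (Frm.imp a (Frm.imp b c)) (Frm.imp (Frm.and a b) c)) := by
  intro v hn ha
  simp only [Frm.imp, hn, ha]
  cases v a <;> cases v b <;> cases v c <;> rfl

theorem absurd (a b : Frm m) : IsTautology (Frm.imp a (Frm.imp (Frm.neg a) b)) := by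
  intro v hn ha
  simp only [Frm.imp, hn, ha]
  cases v a <;> cases v b <;> rfl

theorem not_imp_self (a : Frm m) : IsTautology (Frm.imp (Frm.imp (Frm.neg a) a) a) := by
  intro v hn ha
  simp only [Frm.imp, hn, ha]
  cases v a <;> rfl

theorem not_not (a : Frm m) : IsTautology (Frm.imp (Frm.neg (Frm.neg a)) a) := by
  intro v hn ha
  simp only [Frm.imp, hn, ha]
  cases v a <;> rfl

theorem and_left (a b : Frm m) : IsTautology (Frm.imp (Frm.and a b) a) := by
  intro v hn ha
  simp only [Frm.imp, hn, ha]
  cases v a <;> cases v b <;> rfl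

theorem and_right (a b : Frm m) : IsTautology (Frm.imp (Frm.and a b) b) := by
  intro v hn ha
  simp only [Frm.imp, hn, ha]
  cases v a <;> cases v b <;> rfl

end IsTautology

theorem Deriv.tauto_mp {T : Set (Frm m)} {φ ψ : Frm m} (ht : IsTautology (Frm.imp φ ψ))
    (h : Deriv T φ) : Deriv T ψ :=
  .mp (.tauto ht) h

theorem Deriv.imp_intro {T : Set (Frm m)} {φ ψ : Frm m} (h : Deriv T ψ) :
    Deriv T (Frm.imp φ ψ) :=
  h.tauto_mp (.imp_intro _ _)

/-- The infinitary rules RU, RS, RC, RGA, RA: `InfRule Γ τ` says that `Φ(τ)` may be inferred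
from all `Φ(γ)`, `γ ∈ Γ`, for every `k`-nested implication `Φ = KNI β0 L`. -/
inductive InfRule : Set (Frm m) → Frm m → Prop
  | negUntil (α β : Frm m) :
      InfRule (Set.range fun i => Frm.neg
        (Frm.and (Frm.conjBelow (fun l => Frm.nextPow l α) i) (Frm.nextPow i β)))
        (Frm.neg (Frm.until α β))
  | negSince (α β : Frm m) :
      InfRule (Set.range fun i => Frm.neg
        (Frm.and (Frm.conjBelow (fun l => Frm.prevPow l α) i)
          (Frm.and (Frm.conjBelow (fun l => Frm.neg (Frm.prevPow l (Frm.and α (Frm.neg α))))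
            (i + 1)) (Frm.prevPow i β))))
        (Frm.neg (Frm.since α β))
  | common (α : Frm m) : InfRule (Set.range fun i => Frm.ekPow i α) (Frm.common α)
  | pge (α : Frm m) {r : ℚ} (hr0 : 0 < r) (hr1 : r ≤ 1) :
      InfRule {γ | ∃ i : ℕ, 1 / r ≤ (i : ℚ) ∧ γ = Frm.pge (r - 1 / (i : ℚ)) α} (Frm.pge r α)
  | page (a : Fin m) (α : Frm m) {r : ℚ} (hr0 : 0 < r) (hr1 : r ≤ 1) :
      InfRule {γ | ∃ i : ℕ, 1 / r ≤ (i : ℚ) ∧ γ = Frm.page a (r - 1 / (i : ℚ)) α}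
        (Frm.page a r α)

theorem Deriv.of_infRule {T Γ : Set (Frm m)} {τ β0 : Frm m} {L : List (Frm m × Op m)}
    (hr : InfRule Γ τ) (h : ∀ γ ∈ Γ, Deriv T (KNI β0 L γ)) : Deriv T (KNI β0 L τ) := by
  cases hr with
  | negUntil => exact .ruleUntil fun i => h _ ⟨i, rfl⟩
  | negSince => exact .ruleSince fun i => h _ ⟨i, rfl⟩
  | common => exact .ruleCommon fun i => h _ ⟨i, rfl⟩
  | pge _ hr0 hr1 => exact .ruleArch hr0 hr1 fun i hi => h _ ⟨i, hi, rfl⟩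
  | page _ _ hr0 hr1 => exact .ruleArchA _ hr0 hr1 fun i hi => h _ ⟨i, hi, rfl⟩

theorem Deriv.closure_induction {S : Set (Frm m)} {P : Frm m → Prop}
    (hyp : ∀ φ ∈ S, P φ) (thm : ∀ φ, (∀ T, Deriv T φ) → P φ)
    (mp : ∀ φ ψ, P (Frm.imp φ ψ) → P φ → P ψ)
    (inf : ∀ Γ τ β0 L, InfRule Γ τ → (∀ γ ∈ Γ, P (KNI β0 L γ)) → P (KNI β0 L τ))
    {ψ : Frm m} (hd : Deriv S ψ) : P ψ := by
  induction hd with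
  | hyp h => exact hyp _ h
  | tauto h => exact thm _ fun _ => .tauto h
  | mp _ _ ih1 ih2 => exact mp _ _ (ih1 hyp) (ih2 hyp)
  | axNextNeg α => exact thm _ fun _ => .axNextNeg α
  | axNextImp α β => exact thm _ fun _ => .axNextImp α β
  | axUntilNext α β => exact thm _ fun _ => .axUntilNext α β
  | axUntilSometime α β => exact thm _ fun _ => .axUntilSometime α β
  | axPrevNeg α => exact thm _ fun _ => .axPrevNeg α
  | axPrevImp α β => exact thm _ fun _ => .axPrevImp α β
  | axPrevAnd α β => exact thm _ fun _ => .axPrevAnd α β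
  | axNextPrev α => exact thm _ fun _ => .axNextPrev α
  | axNextPrevC1 α => exact thm _ fun _ => .axNextPrevC1 α
  | axNextPrevC2 α γ => exact thm _ fun _ => .axNextPrevC2 α γ
  | axSincePrev α β => exact thm _ fun _ => .axSincePrev α β
  | axOncePrev β => exact thm _ fun _ => .axOncePrev β
  | ruleNextNec h => exact thm _ fun _ => .ruleNextNec h
  | rulePrevNec h => exact thm _ fun _ => .rulePrevNec h
  | ruleUntil _ ih => exact inf _ _ _ _ (.negUntil _ _) (Set.forall_mem_range.2 (ih · hyp))
  | ruleSince _ ih => exact inf _ _ _ _ (.negSince _ _) (Set.forall_mem_range.2 (ih · hyp))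
  | axKImp a α β => exact thm _ fun _ => .axKImp a α β
  | axKRefl a α => exact thm _ fun _ => .axKRefl a α
  | axKAware a => exact thm _ fun _ => .axKAware a
  | axKDead a α => exact thm _ fun _ => .axKDead a α
  | axKSymm a α => exact thm _ fun _ => .axKSymm a α
  | axKTrans a α => exact thm _ fun _ => .axKTrans a α
  | axCommon α n => exact thm _ fun _ => .axCommon α n
  | ruleKNec a h => exact thm _ fun _ => .ruleKNec a h
  | ruleCommon _ ih => exact inf _ _ _ _ (.common _) (Set.forall_mem_range.2 (ih · hyp))
  | axPge0 α => exact thm _ fun _ => .axPge0 α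
  | axPleLt α hr ht hlt => exact thm _ fun _ => .axPleLt α hr ht hlt
  | axPltLe α ht => exact thm _ fun _ => .axPltLe α ht
  | axPAdd α β hr ht => exact thm _ fun _ => .axPAdd α β hr ht
  | axPAdd2 α β hr ht hle => exact thm _ fun _ => .axPAdd2 α β hr ht hle
  | axPPrev α => exact thm _ fun _ => .axPPrev α
  | rulePNec h => exact thm _ fun _ => .rulePNec h
  | ruleArch hr0 hr1 _ ih =>
      exact inf _ _ _ _ (.pge _ hr0 hr1) fun _ ⟨i, hi, hγ⟩ => hγ ▸ ih i hi hyp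
  | axPAge0 a α => exact thm _ fun _ => .axPAge0 a α
  | axPALeLt a α hr ht hlt => exact thm _ fun _ => .axPALeLt a α hr ht hlt
  | axPALtLe a α ht => exact thm _ fun _ => .axPALtLe a α ht
  | axPAAdd a α β hr ht => exact thm _ fun _ => .axPAAdd a α β hr ht
  | axPAAdd2 a α β hr ht hle => exact thm _ fun _ => .axPAAdd2 a α β hr ht hle
  | rulePANec a h => exact thm _ fun _ => .rulePANec a h
  | ruleArchA a hr0 hr1 _ ih =>
      exact inf _ _ _ _ (.page a _ hr0 hr1) fun _ ⟨i, hi, hγ⟩ => hγ ▸ ih i hi hyp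

/-- `φ` is conjoined to the outermost antecedent. -/
theorem exists_kni_imp_equiv (φ β0 : Frm m) (L : List (Frm m × Op m)) :
    ∃ β0' L', ∀ γ, IsTautology (Frm.imp (Frm.imp φ (KNI β0 L γ)) (KNI β0' L' γ)) ∧
      IsTautology (Frm.imp (KNI β0' L' γ) (Frm.imp φ (KNI β0 L γ))) := by
  cases L with
  | nil => exact ⟨Frm.and φ β0, [], fun _ => ⟨.and_imp_mpr _ _ _, .and_imp_mp _ _ _⟩⟩
  | cons p L =>
      exact ⟨β0, (Frm.and φ p.1, p.2) :: L, fun _ => ⟨.and_imp_mpr _ _ _, .and_imp_mp _ _ _⟩⟩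

theorem Deriv.imp_kni_of_infRule {T Γ : Set (Frm m)} {φ τ β0 : Frm m}
    {L : List (Frm m × Op m)} (hr : InfRule Γ τ)
    (h : ∀ γ ∈ Γ, Deriv T (Frm.imp φ (KNI β0 L γ))) :
    Deriv T (Frm.imp φ (KNI β0 L τ)) := by
  obtain ⟨β0', L', hequiv⟩ := exists_kni_imp_equiv φ β0 L
  exact (Deriv.of_infRule hr fun γ hγ => (h γ hγ).tauto_mp (hequiv γ).1).tauto_mp (hequiv τ).2

theorem Deriv.prev_kni_of_infRule {T Γ : Set (Frm m)} {τ β0 : Frm m}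
    {L : List (Frm m × Op m)} (hr : InfRule Γ τ)
    (h : ∀ γ ∈ Γ, Deriv T (Frm.prev (KNI β0 L γ))) :
    Deriv T (Frm.prev (KNI β0 L τ)) :=
  have h' : Deriv T (KNI β0 ((Frm.verum, Op.prev) :: L) τ) :=
    Deriv.of_infRule hr fun γ hγ => (h γ hγ).imp_intro
  h'.mp (.tauto (.imp_self _))

theorem Deriv.deduction {T : Set (Frm m)} {φ ψ : Frm m} (h : Deriv (insert φ T) ψ) :
    Deriv T (Frm.imp φ ψ) := by
  refine h.closure_induction (P := fun ψ => Deriv T (Frm.imp φ ψ)) ?_ ?_ ?_ ?_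
  · rintro χ (rfl | hχ)
    exacts [.tauto (.imp_self _), Deriv.imp_intro (.hyp hχ)]
  · exact fun χ hχ => (hχ T).imp_intro
  · exact fun χ ψ h1 h2 => .mp (h1.tauto_mp (.imp_imp_distrib _ _ _)) h2
  · exact fun Γ τ β0 L hr h => Deriv.imp_kni_of_infRule hr h

/-- `T^{-●}`. -/
def unprev (T : Set (Frm m)) : Set (Frm m) := {α | Frm.prev α ∈ T}

/-- `S^{-◯}`. -/
def unnext (S : Set (Frm m)) : Set (Frm m) := {α | Frm.next α ∈ S}

theorem Deriv.prev_of_unprev {T : Set (Frm m)} {ψ : Frm m} (h : Deriv (unprev T) ψ) :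
    Deriv T (Frm.prev ψ) := by
  refine h.closure_induction (P := fun ψ => Deriv T (Frm.prev ψ)) ?_ ?_ ?_ ?_
  · exact fun _ hχ => .hyp hχ
  · exact fun χ hχ => .rulePrevNec (hχ ∅)
  · exact fun χ ψ h1 h2 => .mp (.mp (.axPrevImp _ _) h1) h2
  · exact fun Γ τ β0 L hr h => Deriv.prev_kni_of_infRule hr h

namespace MaximalConsistent

variable {T : Set (Frm m)}

theorem inconsistent_insert (hT : MaximalConsistent T) {φ : Frm m} (h : φ ∉ T) :
    Inconsistent (insert φ T) :=
  not_not.mp (hT.2 _ (Set.ssubset_insert h))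

theorem mem_of_deriv (hT : MaximalConsistent T) {φ : Frm m} (h : Deriv T φ) : φ ∈ T := by
  by_contra hφ
  exact hT.1 fun ψ => .mp (Deriv.deduction (hT.inconsistent_insert hφ ψ)) h

theorem mem_or_neg_mem (hT : MaximalConsistent T) (φ : Frm m) : φ ∈ T ∨ Frm.neg φ ∈ T := by
  refine or_iff_not_imp_right.2 fun hn => hT.mem_of_deriv ?_
  exact (Deriv.deduction (hT.inconsistent_insert hn φ)).tauto_mp (.not_imp_self φ)

theorem mem_iff_of_deriv_ifff (hT : MaximalConsistent T) {φ ψ : Frm m}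
    (h : Deriv T (Frm.ifff φ ψ)) : φ ∈ T ↔ ψ ∈ T :=
  ⟨fun hφ => hT.mem_of_deriv (.mp (h.tauto_mp (.and_left _ _)) (.hyp hφ)),
    fun hψ => hT.mem_of_deriv (.mp (h.tauto_mp (.and_right _ _)) (.hyp hψ))⟩

theorem of_mem_or_neg_mem {U : Set (Frm m)} (hU : Consistent U)
    (h : ∀ φ, φ ∈ U ∨ Frm.neg φ ∈ U) : MaximalConsistent U := by
  refine ⟨hU, fun S hUS hS => ?_⟩
  obtain ⟨φ, hφS, hφU⟩ := Set.exists_of_ssubset hUS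
  have hnφ : Frm.neg φ ∈ S := hUS.subset ((h φ).resolve_left hφU)
  exact hS fun ψ => .mp ((Deriv.hyp hφS).tauto_mp (.absurd φ ψ)) (.hyp hnφ)

theorem prev_mem_of_deriv_unprev (hT : MaximalConsistent T) {φ : Frm m}
    (h : Deriv (unprev T) φ) : Frm.prev φ ∈ T :=
  hT.mem_of_deriv h.prev_of_unprev

theorem consistent_unprev (hT : MaximalConsistent T) {γ : Frm m}
    (h : Frm.prev (Frm.and γ (Frm.neg γ)) ∉ T) : Consistent (unprev T) :=
  fun hinc => h (hT.prev_mem_of_deriv_unprev (hinc _))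

theorem mem_or_neg_mem_unprev (hT : MaximalConsistent T) (φ : Frm m) :
    φ ∈ unprev T ∨ Frm.neg φ ∈ unprev T := by
  refine or_iff_not_imp_left.2 fun hφ => ?_
  suffices Frm.neg (Frm.prev (Frm.neg (Frm.neg φ))) ∈ T from
    hT.mem_of_deriv (.mp (.axPrevNeg _) (.hyp this))
  refine (hT.mem_or_neg_mem _).resolve_left fun hnn => hφ ?_
  exact hT.prev_mem_of_deriv_unprev ((Deriv.hyp (T := unprev T) hnn).tauto_mp (.not_not φ))

theorem unnext_unprev (hT : MaximalConsistent T) {γ : Frm m}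
    (h : Frm.prev (Frm.and γ (Frm.neg γ)) ∉ T) : unnext (unprev T) = T := by
  have hγ : Frm.neg (Frm.prev (Frm.and γ (Frm.neg γ))) ∈ T :=
    (hT.mem_or_neg_mem _).resolve_left h
  ext α
  calc α ∈ unnext (unprev T) ↔ Frm.next (Frm.prev α) ∈ T :=
        (hT.mem_iff_of_deriv_ifff (.mp (.axNextPrevC2 α γ) (.hyp hγ))).symm
    _ ↔ α ∈ T := hT.mem_iff_of_deriv_ifff (.axNextPrev α)

theorem unprev (hT : MaximalConsistent T) {γ : Frm m}
    (h : Frm.prev (Frm.and γ (Frm.neg γ)) ∉ T) : MaximalConsistent (PTEL.unprev T) :=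
  of_mem_or_neg_mem (hT.consistent_unprev h) hT.mem_or_neg_mem_unprev

end MaximalConsistent

end

/-- If `T` is maximal consistent and `●(α ∧ ¬α) ∉ T` for every `α`, then
`T^{-●} = {α : ●α ∈ T}` is maximal consistent and `T = (T^{-●})^{-◯}`. -/
theorem mcs_unprev {m : ℕ} (T : Set (Frm m)) (hT : MaximalConsistent T)
    (h : ∀ α : Frm m, Frm.prev (Frm.and α (Frm.neg α)) ∉ T) :
    MaximalConsistent {α : Frm m | Frm.prev α ∈ T} ∧
    T = {α : Frm m | Frm.next α ∈ {β : Frm m | Frm.prev β ∈ T}} :=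
  ⟨hT.unprev (h (Frm.atom 0)), (hT.unnext_unprev (h (Frm.atom 0))).symm⟩

end PTEL
end

section
/- Let T be an Ax-maximal consistent set of PTEL formulas, a an agent, and α a formula. If K_a α ∉ T, then the set T^{−K_a} ∪ {¬α} is Ax-consistent, where T^{−K_a} = {β : K_a β ∈ T}. -/
/-!
If `T^{-K_a} ∪ {¬α}` were inconsistent, the deduction theorem would give `T^{-K_a} ⊢ α`, and
necessitation applied under the hypotheses would give `T ⊢ K_a α`; a maximal consistent set is
deductively closed, so `K_a α ∈ T`. The deduction theorem and this form of necessitation survive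
the infinitary rules because those rules are stated for `k`-nested implications, into which an
extra antecedent or an outer `K_a` can be absorbed.
-/

namespace PTEL

variable {m : ℕ}

section Tautologies

variable (φ ψ χ : Frm m)

theorem isTautology_verum : IsTautology (Frm.verum : Frm m) := by
  intro v hneg hand
  simp only [Frm.verum, Frm.imp, hneg, hand]
  cases v (Frm.atom 0) <;> rfl

theorem isTautology_imp_self : IsTautology (φ.imp φ) := by
  intro v hneg hand
  simp only [Frm.imp, hneg, hand]
  cases v φ <;> rfl

theorem isTautology_imp_imp_self : IsTautology (φ.imp (ψ.imp φ)) := by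
  intro v hneg hand
  simp only [Frm.imp, hneg, hand]
  cases v φ <;> cases v ψ <;> rfl

theorem isTautology_imp_distrib :
    IsTautology ((φ.imp (ψ.imp χ)).imp ((φ.imp ψ).imp (φ.imp χ))) := by
  intro v hneg hand
  simp only [Frm.imp, hneg, hand]
  cases v φ <;> cases v ψ <;> cases v χ <;> rfl

theorem isTautology_curry : IsTautology ((φ.imp (ψ.imp χ)).imp ((φ.and ψ).imp χ)) := by
  intro v hneg hand
  simp only [Frm.imp, hneg, hand]
  cases v φ <;> cases v ψ <;> cases v χ <;> rfl

theorem isTautology_uncurry : IsTautology (((φ.and ψ).imp χ).imp (φ.imp (ψ.imp χ))) := by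
  intro v hneg hand
  simp only [Frm.imp, hneg, hand]
  cases v φ <;> cases v ψ <;> cases v χ <;> rfl

theorem isTautology_neg_imp_self_imp : IsTautology ((φ.neg.imp φ).imp φ) := by
  intro v hneg hand
  simp only [Frm.imp, hneg, hand]
  cases v φ <;> rfl

end Tautologies

namespace Deriv

variable {T : Set (Frm m)} {φ ψ : Frm m}

theorem mp_tauto (hφψ : IsTautology (φ.imp ψ)) (hφ : Deriv T φ) : Deriv T ψ :=
  mp (tauto hφψ) hφ

theorem imp_intro_s18 (h : Deriv T ψ) : Deriv T (φ.imp ψ) :=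
  mp_tauto (isTautology_imp_imp_self ψ φ) h

theorem iff_of_isTautology (hφψ : IsTautology (φ.imp ψ)) (hψφ : IsTautology (ψ.imp φ)) :
    Deriv T φ ↔ Deriv T ψ :=
  ⟨mp_tauto hφψ, mp_tauto hψφ⟩

theorem transport (F : Frm m → Frm m) {T' : Set (Frm m)}
    (hHyp : ∀ φ ∈ T, Deriv T' (F φ))
    (hThm : ∀ φ, (∀ S : Set (Frm m), Deriv S φ) → Deriv T' (F φ))
    (hMp : ∀ φ ψ, Deriv T' (F (φ.imp ψ)) → Deriv T' (F φ) → Deriv T' (F ψ))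
    (hNested : ∀ β0 L, ∃ β0' L', ∀ τ, Deriv T' (F (KNI β0 L τ)) ↔ Deriv T' (KNI β0' L' τ))
    (h : Deriv T ψ) : Deriv T' (F ψ) := by
  induction h with
  | hyp h => exact hHyp _ h
  | mp _ _ ih₁ ih₂ => exact hMp _ _ (ih₁ hHyp) (ih₂ hHyp)
  | ruleUntil _ ih =>
    obtain ⟨β0', L', e⟩ := hNested _ _
    exact (e _).2 (.ruleUntil fun i => (e _).1 (ih i hHyp))
  | ruleSince _ ih =>
    obtain ⟨β0', L', e⟩ := hNested _ _
    exact (e _).2 (.ruleSince fun i => (e _).1 (ih i hHyp))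
  | ruleCommon _ ih =>
    obtain ⟨β0', L', e⟩ := hNested _ _
    exact (e _).2 (.ruleCommon fun i => (e _).1 (ih i hHyp))
  | ruleArch hr0 hr1 _ ih =>
    obtain ⟨β0', L', e⟩ := hNested _ _
    exact (e _).2 (.ruleArch hr0 hr1 fun i hi => (e _).1 (ih i hi hHyp))
  | ruleArchA a hr0 hr1 _ ih =>
    obtain ⟨β0', L', e⟩ := hNested _ _
    exact (e _).2 (.ruleArchA a hr0 hr1 fun i hi => (e _).1 (ih i hi hHyp))
  | tauto h => exact hThm _ fun _ => .tauto h
  | axNextNeg α => exact hThm _ fun _ => .axNextNeg α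
  | axNextImp α β => exact hThm _ fun _ => .axNextImp α β
  | axUntilNext α β => exact hThm _ fun _ => .axUntilNext α β
  | axUntilSometime α β => exact hThm _ fun _ => .axUntilSometime α β
  | axPrevNeg α => exact hThm _ fun _ => .axPrevNeg α
  | axPrevImp α β => exact hThm _ fun _ => .axPrevImp α β
  | axPrevAnd α β => exact hThm _ fun _ => .axPrevAnd α β
  | axNextPrev α => exact hThm _ fun _ => .axNextPrev α
  | axNextPrevC1 α => exact hThm _ fun _ => .axNextPrevC1 α
  | axNextPrevC2 α γ => exact hThm _ fun _ => .axNextPrevC2 α γ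
  | axSincePrev α β => exact hThm _ fun _ => .axSincePrev α β
  | axOncePrev β => exact hThm _ fun _ => .axOncePrev β
  | ruleNextNec h => exact hThm _ fun _ => .ruleNextNec h
  | rulePrevNec h => exact hThm _ fun _ => .rulePrevNec h
  | axKImp a α β => exact hThm _ fun _ => .axKImp a α β
  | axKRefl a α => exact hThm _ fun _ => .axKRefl a α
  | axKAware a => exact hThm _ fun _ => .axKAware a
  | axKDead a α => exact hThm _ fun _ => .axKDead a α
  | axKSymm a α => exact hThm _ fun _ => .axKSymm a α
  | axKTrans a α => exact hThm _ fun _ => .axKTrans a α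
  | axCommon α n => exact hThm _ fun _ => .axCommon α n
  | ruleKNec a h => exact hThm _ fun _ => .ruleKNec a h
  | axPge0 α => exact hThm _ fun _ => .axPge0 α
  | axPleLt α hr ht h => exact hThm _ fun _ => .axPleLt α hr ht h
  | axPltLe α ht => exact hThm _ fun _ => .axPltLe α ht
  | axPAdd α β hr ht => exact hThm _ fun _ => .axPAdd α β hr ht
  | axPAdd2 α β hr ht h => exact hThm _ fun _ => .axPAdd2 α β hr ht h
  | axPPrev α => exact hThm _ fun _ => .axPPrev α
  | rulePNec h => exact hThm _ fun _ => .rulePNec h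
  | axPAge0 a α => exact hThm _ fun _ => .axPAge0 a α
  | axPALeLt a α hr ht h => exact hThm _ fun _ => .axPALeLt a α hr ht h
  | axPALtLe a α ht => exact hThm _ fun _ => .axPALtLe a α ht
  | axPAAdd a α β hr ht => exact hThm _ fun _ => .axPAAdd a α β hr ht
  | axPAAdd2 a α β hr ht h => exact hThm _ fun _ => .axPAAdd2 a α β hr ht h
  | rulePANec a h => exact hThm _ fun _ => .rulePANec a h

theorem deduction_s18 (h : Deriv (insert φ T) ψ) : Deriv T (φ.imp ψ) := by
  refine transport (Frm.imp φ) ?_ (fun ψ hψ => imp_intro_s18 (hψ T))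
    (fun _ _ h₁ h₂ => mp (mp_tauto (isTautology_imp_distrib _ _ _) h₁) h₂) ?_ h
  · rintro χ (rfl | hχ)
    · exact tauto (isTautology_imp_self χ)
    · exact imp_intro_s18 (.hyp hχ)
  · rintro β0 (_ | ⟨⟨β, X⟩, L⟩)
    · exact ⟨φ.and β0, [], fun τ =>
        iff_of_isTautology (isTautology_curry _ _ _) (isTautology_uncurry _ _ _)⟩
    · exact ⟨β0, (φ.and β, X) :: L, fun τ =>
        iff_of_isTautology (isTautology_curry _ _ _) (isTautology_uncurry _ _ _)⟩

theorem know_of_forall_know {T' : Set (Frm m)} (a : Fin m) (h : Deriv T ψ)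
    (hT : ∀ β ∈ T, Deriv T' (Frm.know a β)) : Deriv T' (Frm.know a ψ) := by
  refine transport (Frm.know a) hT (fun ψ hψ => ruleKNec a (hψ ∅))
    (fun _ _ h₁ h₂ => mp (mp (axKImp a _ _) h₁) h₂) ?_ h
  -- `K_a Φ` is equivalent to the nested implication `⊤ → K_a Φ`.
  exact fun β0 L => ⟨β0, (Frm.verum, .know a) :: L, fun τ =>
    ⟨imp_intro_s18, fun h => mp h (tauto isTautology_verum)⟩⟩

theorem of_inconsistent_insert_neg (h : Inconsistent (insert φ.neg T)) : Deriv T φ :=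
  mp_tauto (isTautology_neg_imp_self_imp φ) (deduction_s18 (h φ))

end Deriv

theorem MaximalConsistent.mem_of_deriv_s18 {T : Set (Frm m)} {φ : Frm m}
    (hT : MaximalConsistent T) (h : Deriv T φ) : φ ∈ T := by
  by_contra hφ
  have hinc : Inconsistent (insert φ T) := not_not.mp (hT.2 _ (Set.ssubset_insert hφ))
  exact hT.1 fun ψ => Deriv.mp (Deriv.deduction_s18 (hinc ψ)) h

/-- If `T` is maximal consistent and `K_a α ∉ T`, then `T^{-K_a} ∪ {¬α}` is
consistent, where `T^{-K_a} = {β : K_a β ∈ T}`. -/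
theorem mcs_unknow {m : ℕ} (T : Set (Frm m)) (hT : MaximalConsistent T)
    (a : Fin m) (α : Frm m) (h : Frm.know a α ∉ T) :
    Consistent (insert (Frm.neg α) {β : Frm m | Frm.know a β ∈ T}) := by
  intro hinc
  have hα : Deriv {β | Frm.know a β ∈ T} α := Deriv.of_inconsistent_insert_neg hinc
  exact h (hT.mem_of_deriv_s18 (hα.know_of_forall_know a fun _ hβ => .hyp hβ))

end PTEL
end
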